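/- Let K be a field, let v be a K-valuation on K(x,y), and suppose α is a negative indivisible element of the value group and β is not commensurable with α. If v(x) = mα, v(y) = nα with m, n coprime positive integers, v(K[x,y]*) is reversely well-ordered, v(K(x,y)*) = ℤ⊕ℤ, and w ∈ K[x,y]* satisfies deg_y w = m and v(w) = β, then v(K(x)[y]*) ⊆ ℤα + ℤ_{≥0}β. -/

import Mathlib

open Polynomial

/-- An element of `K(x)[y]` lies in `K[x,y]` iff all its coefficients are polynomials. -/
def polyCoeffs (K : Type*) [Field K] (f : Polynomial (RatFunc K)) : Prop :=
  ∀ i : ℕ, ∃ p : Polynomial K, f.coeff i = algebraMap (Polynomial K) (RatFunc K) p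

/-!
A polynomial `f = Σ cᵢ(x) yⁱ` of `y`-degree `< m` has terms of values `(eᵢ m + i n) α`, pairwise
distinct because `m` and `n` are coprime, so `v f ∈ ℤ α`. For larger degree, divide by `w`:
`f = w q + r` with `deg r < m`; by induction `v (w q) ∈ ℤ α + ℤ_{>0} β`, and as `β` has infinite
order modulo `ℤ α` the two summands have distinct values, so `v f` is one of them.

That `β ≠ 0` comes from the reverse well-ordering: if `v w = 0`, the residue field being `K`
gives `λ ∈ K` with `v (w + λ) > 0`, and the powers of `w + λ ∈ K[x,y]` have values in
`v(K[x,y]*)` that increase without bound.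
-/

theorem Nat.eq_of_mul_add_mul_eq_of_coprime {m n i j : ℕ} (hmn : m.Coprime n) (hi : i < m)
    (hj : j < m) {a b : ℤ} (h : a * m + i * n = b * m + j * n) : i = j := by
  have hdvd : (m : ℤ) ∣ (j - i) * n := ⟨a - b, by linarith⟩
  have hdvd' := (Nat.isCoprime_iff_coprime.mpr hmn).dvd_of_dvd_mul_right hdvd
  have := Int.eq_zero_of_abs_lt_dvd hdvd' (by rw [abs_lt]; omega)
  omega

theorem nonpos_of_forall_succ_nsmul_mem {Γ : Type*} [AddCommMonoid Γ] [PartialOrder Γ]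
    [IsOrderedCancelAddMonoid Γ] {T : Set Γ}
    (hT : ∀ S ⊆ T, S.Nonempty → ∃ mx ∈ S, ∀ s ∈ S, s ≤ mx) {γ : Γ}
    (hγ : ∀ k : ℕ, (k + 1) • γ ∈ T) : γ ≤ 0 := by
  obtain ⟨_, ⟨k, rfl⟩, hmax⟩ :=
    hT (Set.range fun k : ℕ => (k + 1) • γ) (Set.range_subset_iff.mpr hγ) (Set.range_nonempty _)
  have : (k + 1 + 1) • γ ≤ (k + 1) • γ := hmax _ ⟨k + 1, rfl⟩
  rw [succ_nsmul _ (k + 1)] at this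
  exact le_of_add_le_add_left (this.trans_eq (add_zero _).symm)

theorem polyCoeffs_iff_mem_lifts {K : Type*} [Field K] (f : (RatFunc K)[X]) :
    polyCoeffs K f ↔ f ∈ lifts (algebraMap K[X] (RatFunc K)) := by
  simp [polyCoeffs, lifts_iff_coeff_lifts, Set.mem_range, eq_comm]

namespace AddValuation

theorem exists_coe_eq {R Γ : Type*} [Ring R] [Nontrivial R] [AddCommGroup Γ] [LinearOrder Γ]
    [IsOrderedAddMonoid Γ] (v : R → WithTop Γ) (hv0 : ∀ f, v f = ⊤ ↔ f = 0)
    (hvmul : ∀ f g, v (f * g) = v f + v g) (hvadd : ∀ f g, min (v f) (v g) ≤ v (f + g)) :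
    ∃ V : AddValuation R (WithTop Γ), ⇑V = v := by
  have h1 : v 1 = 0 := by
    obtain ⟨γ, hγ⟩ := WithTop.ne_top_iff_exists.mp (mt (hv0 1).mp one_ne_zero)
    have := hvmul 1 1
    rw [mul_one, ← hγ, ← WithTop.coe_add, WithTop.coe_inj, left_eq_add] at this
    rw [← hγ, this, WithTop.coe_zero]
  exact ⟨of v ((hv0 0).mpr rfl) h1 hvadd hvmul, rfl⟩

section Monoid

variable {R Γ₀ : Type*} [Ring R] [LinearOrderedAddCommMonoidWithTop Γ₀] (v : AddValuation R Γ₀)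

theorem exists_map_sum_eq_of_injOn {ι : Type*} {s : Finset ι} (hs : s.Nonempty) {f : ι → R}
    (hf : Set.InjOn (fun i => v (f i)) s) : ∃ i ∈ s, v (∑ j ∈ s, f j) = v (f i) := by
  classical
  obtain ⟨i, hi, hmin⟩ := s.exists_min_image (fun i => v (f i)) hs
  refine ⟨i, hi, ?_⟩
  rw [← Finset.add_sum_erase s f hi]
  rcases (s.erase i).eq_empty_or_nonempty with hempty | ⟨j, hj⟩
  · rw [hempty, Finset.sum_empty, add_zero]
  have hlt : ∀ k ∈ s.erase i, v (f i) < v (f k) := fun k hk =>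
    (hmin k (Finset.mem_of_mem_erase hk)).lt_of_ne
      fun h => Finset.ne_of_mem_erase hk (hf (Finset.mem_of_mem_erase hk) hi h.symm)
  exact v.map_add_eq_of_lt_left (v.map_lt_sum' ((hlt j hj).trans_le le_top) hlt)

theorem exists_map_eval₂_eq {S : Type*} [Semiring S] (φ : S →+* R) (t : R) {p : S[X]}
    (hp : p ≠ 0) (hinj : Set.InjOn (fun i => v (φ (p.coeff i)) + i • v t) p.support) :
    ∃ i ∈ p.support, v (p.eval₂ φ t) = v (φ (p.coeff i)) + i • v t := by
  have hterm : ∀ i, v (φ (p.coeff i) * t ^ i) = v (φ (p.coeff i)) + i • v t := fun i => by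
    rw [v.map_mul, v.map_pow]
  simp_rw [eval₂_eq_sum, Polynomial.sum_def, ← hterm] at hinj ⊢
  exact v.exists_map_sum_eq_of_injOn (support_nonempty.mpr hp) hinj

theorem map_eq_zero_of_existsUnique {K : Type*} [Field K] (κ : K →+* R)
    (hres : ∃! lam : K, 0 < v (1 + κ lam)) {c : K} (hc : c ≠ 0) : v (κ c) = 0 := by
  obtain ⟨lam, hlam, huniq⟩ := hres
  have hle : ∀ a : K, a ≠ 0 → v (κ a) ≤ 0 := fun a ha => by
    by_contra! hpos
    have := huniq (lam + a) (by
      show 0 < v (1 + κ (lam + a))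
      rw [κ.map_add, ← add_assoc]; exact v.map_lt_add hlam hpos)
    exact ha (by simpa using this)
  have hsum : v (κ c) + v (κ c⁻¹) = 0 := by
    rw [← v.map_mul, ← _root_.map_mul, mul_inv_cancel₀ hc, _root_.map_one, v.map_one]
  refine le_antisymm (hle c hc) ?_
  calc (0 : Γ₀) = v (κ c) + v (κ c⁻¹) := hsum.symm
    _ ≤ v (κ c) + 0 := add_le_add le_rfl (hle _ (inv_ne_zero hc))
    _ = v (κ c) := add_zero _

end Monoid

section Group

variable {R Γ : Type*} [Ring R] [AddCommGroup Γ] [LinearOrder Γ] [IsOrderedAddMonoid Γ]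
  (v : AddValuation R (WithTop Γ))

theorem exists_map_polynomial_eq_nsmul {F : Type*} [Semiring F] (φ : F[X] →+* R)
    (hC : ∀ a : F, a ≠ 0 → v (φ (C a)) = 0) {γ : Γ} (hγ : γ ≠ 0) (hX : v (φ X) = γ)
    {p : F[X]} (hp : p ≠ 0) : ∃ i : ℕ, v (φ p) = ↑(i • γ) := by
  have hterm : ∀ i ∈ p.support, v (φ (C (p.coeff i))) + i • v (φ X) = ↑(i • γ) :=
    fun i hi => by rw [hC _ (mem_support_iff.mp hi), hX, zero_add, WithTop.coe_nsmul]
  have hφ : φ p = p.eval₂ (φ.comp C) (φ X) := by rw [← hom_eval₂, eval₂_C_X]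
  obtain ⟨i, hi, hval⟩ := v.exists_map_eval₂_eq (φ.comp C) (φ X) hp fun i hi j hj hij => by
    simp only [RingHom.comp_apply, hterm i hi, hterm j hj, WithTop.coe_inj] at hij
    have hij' : (i : ℤ) • γ = (j : ℤ) • γ := by simpa only [natCast_zsmul] using hij
    exact_mod_cast smul_left_injective ℤ hγ hij'
  exact ⟨i, by rw [hφ, hval, RingHom.comp_apply, hterm i hi]⟩

theorem exists_map_ratFunc_eq_zsmul {K : Type*} [Field K] (ψ : RatFunc K →+* R)
    (hC : ∀ a : K, a ≠ 0 → v (ψ (RatFunc.C a)) = 0) {γ : Γ} (hγ : γ ≠ 0)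
    (hX : v (ψ RatFunc.X) = γ) {r : RatFunc K} (hr : r ≠ 0) : ∃ e : ℤ, v (ψ r) = ↑(e • γ) := by
  set φ := ψ.comp (algebraMap K[X] (RatFunc K))
  have hpoly : ∀ p : K[X], p ≠ 0 → ∃ i : ℕ, v (φ p) = ↑(i • γ) := fun p hp =>
    v.exists_map_polynomial_eq_nsmul φ (by simpa [φ] using hC) hγ (by simpa [φ] using hX) hp
  obtain ⟨i, hi⟩ := hpoly _ (RatFunc.num_ne_zero hr)
  obtain ⟨j, hj⟩ := hpoly _ r.denom_ne_zero
  have hnum : r * algebraMap K[X] (RatFunc K) r.denom = algebraMap K[X] (RatFunc K) r.num := by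
    nth_rewrite 1 [← RatFunc.num_div_denom r]
    exact div_mul_cancel₀ _ (RatFunc.algebraMap_ne_zero r.denom_ne_zero)
  have hmul : v (ψ r) + ↑(j • γ) = ↑(i • γ) := by
    rw [← hi, ← hj, ← v.map_mul, RingHom.comp_apply, RingHom.comp_apply, ← ψ.map_mul, hnum]
  obtain ⟨δ, hδ⟩ := WithTop.ne_top_iff_exists.mp fun htop : v (ψ r) = ⊤ => by
    rw [htop, WithTop.top_add] at hmul
    exact WithTop.top_ne_coe hmul
  rw [← hδ, ← WithTop.coe_add, WithTop.coe_inj] at hmul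
  exact ⟨i - j, by rw [← hδ, sub_smul, natCast_zsmul, natCast_zsmul, ← hmul, add_sub_cancel_right]⟩

theorem exists_map_eval₂_eq_zsmul_of_natDegree_lt {F : Type*} [Semiring F] (φ : F →+* R)
    {t : R} {α : Γ} (hα : α ≠ 0) {m n : ℕ} (hmn : m.Coprime n)
    (hφ : ∀ c : F, c ≠ 0 → ∃ e : ℤ, v (φ c) = ↑((e * m) • α)) (ht : v t = ↑((n : ℤ) • α))
    {f : F[X]} (hf : f ≠ 0) (hdeg : f.natDegree < m) :
    ∃ c : ℤ, v (f.eval₂ φ t) = ↑(c • α) := by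
  have hterm : ∀ i ∈ f.support, ∃ e : ℤ,
      v (φ (f.coeff i)) + i • v t = ↑((e * m + i * n) • α) := fun i hi => by
    obtain ⟨e, he⟩ := hφ _ (mem_support_iff.mp hi)
    refine ⟨e, ?_⟩
    rw [he, ht, ← WithTop.coe_nsmul, ← WithTop.coe_add, add_smul, mul_smul (i : ℤ)]
    simp only [natCast_zsmul]
  have hlt : ∀ i ∈ f.support, i < m := fun i hi => (le_natDegree_of_mem_supp i hi).trans_lt hdeg
  obtain ⟨i, hi, hval⟩ := v.exists_map_eval₂_eq φ t hf fun i hi j hj hij => by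
    obtain ⟨a, ha⟩ := hterm i hi
    obtain ⟨b, hb⟩ := hterm j hj
    simp only [ha, hb, WithTop.coe_inj] at hij
    exact Nat.eq_of_mul_add_mul_eq_of_coprime hmn (hlt i hi) (hlt j hj)
      (smul_left_injective ℤ hα hij)
  obtain ⟨e, he⟩ := hterm i hi
  exact ⟨_, hval.trans he⟩

theorem exists_map_eq_zsmul_add_nsmul {F : Type*} [Field F] (φ : F[X] →+* R) {α β : Γ}
    (hαβ : ∀ a b : ℤ, a • α = b • β → b = 0) {w : F[X]} (hw : 0 < w.natDegree)
    (hvw : v (φ w) = β)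
    (hlow : ∀ f : F[X], f ≠ 0 → f.natDegree < w.natDegree → ∃ c : ℤ, v (φ f) = ↑(c • α))
    {f : F[X]} (hf : f ≠ 0) : ∃ (a : ℤ) (b : ℕ), v (φ f) = ↑(a • α + (b : ℤ) • β) := by
  induction hd : f.natDegree using Nat.strong_induction_on generalizing f with
  | _ d ih =>
  subst hd
  by_cases hlt : f.natDegree < w.natDegree
  · obtain ⟨c, hc⟩ := hlow f hf hlt
    exact ⟨c, 0, by simpa using hc⟩
  have hw0 : w ≠ 0 := ne_zero_of_natDegree_gt hw
  have hq0 : f / w ≠ 0 := by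
    rw [Ne, Polynomial.div_eq_zero_iff hw0]
    exact fun h => hlt (natDegree_lt_natDegree hf h)
  have hqdeg : (f / w).natDegree < f.natDegree :=
    natDegree_lt_natDegree hq0 (degree_div_lt hf (natDegree_pos_iff_degree_pos.mp hw))
  obtain ⟨a, b, hab⟩ := ih _ hqdeg hq0 rfl
  have hwq : v (φ (w * (f / w))) = ↑(a • α + ((b + 1 : ℕ) : ℤ) • β) := by
    rw [φ.map_mul, v.map_mul, hvw, hab, ← WithTop.coe_add, WithTop.coe_inj]
    push_cast
    rw [add_smul, one_smul]
    abel
  rw [← EuclideanDomain.div_add_mod f w, φ.map_add]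
  by_cases hr0 : f % w = 0
  · exact ⟨a, b + 1, by rw [hr0, φ.map_zero, add_zero, hwq]⟩
  obtain ⟨c, hc⟩ := hlow _ hr0 (natDegree_mod_lt f hw.ne')
  have hne : v (φ (w * (f / w))) ≠ v (φ (f % w)) := by
    rw [hwq, hc, Ne, WithTop.coe_inj]
    intro h
    have := hαβ (c - a) (b + 1) (by rw [sub_smul, ← h]; push_cast; abel)
    omega
  rw [v.map_add_of_distinct_val hne]
  rcases min_choice (v (φ (w * (f / w)))) (v (φ (f % w))) with h | h <;> rw [h]
  · exact ⟨a, b + 1, hwq⟩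
  · exact ⟨c, 0, by simpa using hc⟩

end Group

end AddValuation

section TwoVariables

variable {K Γ : Type*} [Field K] [AddCommGroup Γ] [LinearOrder Γ] [IsOrderedAddMonoid Γ]

local notation "ι" => algebraMap (RatFunc K)[X] (RatFunc (RatFunc K))

theorem AddValuation.map_ne_zero_of_polyCoeffs
    (v : AddValuation (RatFunc (RatFunc K)) (WithTop Γ))
    (hres : ∀ f g, v f = v g → v f ≠ ⊤ → ∃! lam : K, v f < v (f + ι (C (RatFunc.C lam)) * g))
    (hrwo : ∀ S : Set Γ, S ⊆ {γ : Γ | ∃ f, polyCoeffs K f ∧ f ≠ 0 ∧ v (ι f) = γ} →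
      S.Nonempty → ∃ mx ∈ S, ∀ s ∈ S, s ≤ mx)
    {w : (RatFunc K)[X]} (hw : polyCoeffs K w) (hdeg : 0 < w.natDegree) : v (ι w) ≠ 0 := by
  intro h0
  obtain ⟨lam, hlam, -⟩ :=
    hres (ι w) 1 (by rw [h0, v.map_one]) (by rw [h0]; exact WithTop.zero_ne_top)
  set u := w + C (RatFunc.C lam)
  rw [mul_one, h0, ← _root_.map_add ι] at hlam
  have hu0 : u ≠ 0 := ne_zero_of_natDegree_gt (natDegree_add_C (a := RatFunc.C lam) ▸ hdeg)
  have hu : u ∈ lifts (algebraMap K[X] (RatFunc K)) :=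
    add_mem ((polyCoeffs_iff_mem_lifts w).mp hw) (RatFunc.algebraMap_C lam ▸ C_mem_lifts _ _)
  obtain ⟨γ, hγ⟩ :=
    WithTop.ne_top_iff_exists.mp (v.ne_top_iff.mpr (RatFunc.algebraMap_ne_zero hu0))
  have hpos : 0 < γ := by rw [← hγ] at hlam; exact_mod_cast hlam
  refine hpos.not_ge (nonpos_of_forall_succ_nsmul_mem hrwo fun k => ?_)
  exact ⟨u ^ (k + 1), (polyCoeffs_iff_mem_lifts _).mpr (pow_mem hu _), pow_ne_zero _ hu0,
    by rw [_root_.map_pow ι, v.map_pow, ← hγ, WithTop.coe_nsmul]⟩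

end TwoVariables

theorem stmt19_general {K Γ : Type*} [Field K] [AddCommGroup Γ] [LinearOrder Γ] [IsOrderedAddMonoid Γ]
    (v : RatFunc (RatFunc K) → WithTop Γ)
    (hv0 : ∀ f, v f = ⊤ ↔ f = 0)
    (hvmul : ∀ f g, v (f * g) = v f + v g)
    (hvadd : ∀ f g, min (v f) (v g) ≤ v (f + g))
    (hvres : ∀ f g, v f = v g → v f ≠ ⊤ →
      ∃! lam : K, v f <
        v (f + algebraMap (Polynomial (RatFunc K)) (RatFunc (RatFunc K))
          (Polynomial.C (RatFunc.C lam)) * g))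
    (α β : Γ) (hαneg : α < 0)
    (hcom : ∀ a b : ℤ, a ≠ 0 → b ≠ 0 → a • α ≠ b • β)
    (m n : ℕ) (hm : 0 < m) (hmn : Nat.Coprime m n)
    -- `v(x) = mα` and `v(y) = nα`
    (hvx : v (algebraMap (Polynomial (RatFunc K)) (RatFunc (RatFunc K))
      (Polynomial.C RatFunc.X)) = (((m : ℤ) • α : Γ) : WithTop Γ))
    (hvy : v (algebraMap (Polynomial (RatFunc K)) (RatFunc (RatFunc K))
      Polynomial.X) = (((n : ℤ) • α : Γ) : WithTop Γ))
    -- `v(K[x,y]*)` is reversely well-ordered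
    (hrwo : ∀ S : Set Γ,
      S ⊆ {γ : Γ | ∃ f : Polynomial (RatFunc K), polyCoeffs K f ∧ f ≠ 0 ∧
        v (algebraMap (Polynomial (RatFunc K)) (RatFunc (RatFunc K)) f) = (γ : WithTop Γ)} →
      S.Nonempty → ∃ mx ∈ S, ∀ s ∈ S, s ≤ mx)
    -- `w ∈ K[x,y]*` with `deg_y w = m` and `v(w) = β`
    (w : Polynomial (RatFunc K)) (hwpoly : polyCoeffs K w)
    (hwdeg : w.natDegree = m)
    (hvw : v (algebraMap (Polynomial (RatFunc K)) (RatFunc (RatFunc K)) w) =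
      (β : WithTop Γ)) :
    ∀ f : Polynomial (RatFunc K), f ≠ 0 →
      ∃ (a : ℤ) (b : ℕ),
        v (algebraMap (Polynomial (RatFunc K)) (RatFunc (RatFunc K)) f) =
          ((a • α + (b : ℤ) • β : Γ) : WithTop Γ) := by
  intro f hf
  obtain ⟨v, rfl⟩ := AddValuation.exists_coe_eq v hv0 hvmul hvadd
  set ι := algebraMap (RatFunc K)[X] (RatFunc (RatFunc K))
  have hconst : ∀ c : K, c ≠ 0 → v (ι (C (RatFunc.C c))) = 0 := fun c hc =>
    v.map_eq_zero_of_existsUnique ((ι.comp C).comp RatFunc.C)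
      (by simpa using hvres 1 1 rfl (by simp)) hc
  have hcoeff : ∀ r : RatFunc K, r ≠ 0 → ∃ e : ℤ, v (ι (C r)) = ↑((e * m) • α) := fun r hr => by
    obtain ⟨e, he⟩ := v.exists_map_ratFunc_eq_zsmul (ι.comp C) hconst
      (smul_ne_zero (by omega) hαneg.ne) hvx hr
    exact ⟨e, by rw [mul_smul]; exact he⟩
  have hlow : ∀ g : (RatFunc K)[X], g ≠ 0 → g.natDegree < w.natDegree →
      ∃ c : ℤ, v (ι g) = ↑(c • α) := fun g hg hdeg => by
    rw [← eval₂_C_X (p := g), hom_eval₂]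
    exact v.exists_map_eval₂_eq_zsmul_of_natDegree_lt (ι.comp C) hαneg.ne hmn hcoeff hvy hg
      (hwdeg ▸ hdeg)
  have hβ : β ≠ 0 := by
    rintro rfl
    exact v.map_ne_zero_of_polyCoeffs hvres hrwo hwpoly (hwdeg ▸ hm) hvw
  have hαβ : ∀ a b : ℤ, a • α = b • β → b = 0 := fun a b h => by
    by_contra hb
    rcases eq_or_ne a 0 with rfl | ha
    · exact hb ((smul_eq_zero.mp (h.symm.trans (zero_smul ℤ α))).resolve_right hβ)
    · exact hcom a b ha hb h
  exact v.exists_map_eq_zsmul_add_nsmul ι hαβ (hwdeg ▸ hm) hvw hlow hf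

/-- Proposition 3.5: let `v` be a `K`-valuation on `K(x,y)` with value group `ℤ⊕ℤ`
(so `v(K(x,y)*) = ℤ⊕ℤ`), with `v(K[x,y]*)` reversely well-ordered, `α` an indivisible
element with `v(x) = mα`, `v(y) = nα` (`m, n` coprime positive), and `w ∈ K[x,y]*` with
`deg_y w = m` and `β = v(w)` not commensurable with `α`. Then
`v(K(x)[y]*) ⊆ ℤα + ℤ_{≥0}β`. -/
theorem stmt19 {K Γ : Type*} [Field K] [AddCommGroup Γ] [LinearOrder Γ] [IsOrderedAddMonoid Γ]
    (v : RatFunc (RatFunc K) → WithTop Γ)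
    (hv0 : ∀ f, v f = ⊤ ↔ f = 0)
    (hvmul : ∀ f g, v (f * g) = v f + v g)
    (hvadd : ∀ f g, min (v f) (v g) ≤ v (f + g))
    (hvres : ∀ f g, v f = v g → v f ≠ ⊤ →
      ∃! lam : K, v f <
        v (f + algebraMap (Polynomial (RatFunc K)) (RatFunc (RatFunc K))
          (Polynomial.C (RatFunc.C lam)) * g))
    -- the value group is `ℤ ⊕ ℤ` and `v` is onto it
    (e : Γ ≃+ ℤ × ℤ)
    (hsurj : ∀ γ : Γ, ∃ f : RatFunc (RatFunc K), f ≠ 0 ∧ v f = (γ : WithTop Γ))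
    (α β : Γ) (hαneg : α < 0)
    (hind : ∀ (k : ℤ) (γ : Γ), 2 ≤ k → α ≠ k • γ)
    (hcom : ∀ a b : ℤ, a ≠ 0 → b ≠ 0 → a • α ≠ b • β)
    (m n : ℕ) (hm : 0 < m) (hn : 0 < n) (hmn : Nat.Coprime m n)
    -- `v(x) = mα` and `v(y) = nα`
    (hvx : v (algebraMap (Polynomial (RatFunc K)) (RatFunc (RatFunc K))
      (Polynomial.C RatFunc.X)) = (((m : ℤ) • α : Γ) : WithTop Γ))
    (hvy : v (algebraMap (Polynomial (RatFunc K)) (RatFunc (RatFunc K))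
      Polynomial.X) = (((n : ℤ) • α : Γ) : WithTop Γ))
    -- `v(K[x,y]*)` is reversely well-ordered
    (hrwo : ∀ S : Set Γ,
      S ⊆ {γ : Γ | ∃ f : Polynomial (RatFunc K), polyCoeffs K f ∧ f ≠ 0 ∧
        v (algebraMap (Polynomial (RatFunc K)) (RatFunc (RatFunc K)) f) = (γ : WithTop Γ)} →
      S.Nonempty → ∃ mx ∈ S, ∀ s ∈ S, s ≤ mx)
    -- `w ∈ K[x,y]*` with `deg_y w = m` and `v(w) = β`
    (w : Polynomial (RatFunc K)) (hwpoly : polyCoeffs K w) (hw0 : w ≠ 0)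
    (hwdeg : w.natDegree = m)
    (hvw : v (algebraMap (Polynomial (RatFunc K)) (RatFunc (RatFunc K)) w) =
      (β : WithTop Γ)) :
    ∀ f : Polynomial (RatFunc K), f ≠ 0 →
      ∃ (a : ℤ) (b : ℕ),
        v (algebraMap (Polynomial (RatFunc K)) (RatFunc (RatFunc K)) f) =
          ((a • α + (b : ℤ) • β : Γ) : WithTop Γ) :=
  stmt19_general v hv0 hvmul hvadd hvres α β hαneg hcom m n hm hmn hvx hvy hrwo w hwpoly hwdeg hvw
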